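/- Let (p, d, k) be Bratteli-diagram data with p 0 = 1, d 0 ⟨0⟩ = 1, such that for every n and every i : Fin (p (n+1)) one has Σ_{j : Fin (p n)} (k n i j) * (d n j) ≤ d (n+1) i and the slack σ(n+1, i) is either 0 or 1. Let S be the set of vertices consisting of the unique vertex at level 0 together with all vertices (n+1, i) with σ(n+1, i) = 1. Then for every n and every i : Fin (p n), the number of paths ending at vertex i of level n whose starting vertex belongs to S is exactly d n i. -/
import Mathlib


/-- The type of paths in the Bratteli diagram with data `(p, k)` which end at vertex `i` of
level `n`.  Such a path either is the empty path based at the vertex `(n, i)` itself, or it is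
a path ending at some vertex `j` of the previous level, extended by one of the `k` edges from
`j` to `i`. -/
def BrattelPath (p : ℕ → ℕ) (k : ∀ n, Fin (p (n + 1)) → Fin (p n) → ℕ) :
    (n : ℕ) → Fin (p n) → Type
  | 0, _ => PUnit
  | n + 1, i => PUnit ⊕ (j : Fin (p n)) × (Fin (k n i j) × BrattelPath p k n j)

/-- The starting vertex of the path belongs to the distinguished set `S`, consisting of the
vertices of level `0` together with all vertices of positive level whose slack equals `1`. -/
def StartsInS (p : ℕ → ℕ) (d : ∀ n, Fin (p n) → ℕ)
    (k : ∀ n, Fin (p (n + 1)) → Fin (p n) → ℕ) :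
    (n : ℕ) → (i : Fin (p n)) → BrattelPath p k n i → Prop
  | 0, _, _ => True
  | n + 1, i, Sum.inl _ => d (n + 1) i - ∑ j, k n i j * d n j = 1
  | n + 1, _, Sum.inr ⟨j, _, x⟩ => StartsInS p d k n j x

instance brattelPathFinite (p : ℕ → ℕ) (k : ∀ n, Fin (p (n + 1)) → Fin (p n) → ℕ) :
    ∀ (n : ℕ) (i : Fin (p n)), Finite (BrattelPath p k n i)
  | 0, _ => inferInstanceAs (Finite PUnit.{1})
  | n + 1, i => by
    have := fun j => brattelPathFinite p k n j
    exact inferInstanceAs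
      (Finite (PUnit ⊕ (j : Fin (p n)) × (Fin (k n i j) × BrattelPath p k n j)))

/-- Decomposition of the paths starting in `S` ending at a vertex of level `n + 1`. -/
def pathEquiv (p : ℕ → ℕ) (d : ∀ n, Fin (p n) → ℕ)
    (k : ∀ n, Fin (p (n + 1)) → Fin (p n) → ℕ) (n : ℕ) (i : Fin (p (n + 1))) :
    {x : BrattelPath p k (n + 1) i // StartsInS p d k (n + 1) i x} ≃
      (PLift (d (n + 1) i - ∑ j, k n i j * d n j = 1) ⊕
        (j : Fin (p n)) × (Fin (k n i j) ×
          {x : BrattelPath p k n j // StartsInS p d k n j x})) where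
  toFun x :=
    match x with
    | ⟨Sum.inl _, h⟩ => Sum.inl ⟨h⟩
    | ⟨Sum.inr ⟨j, e, y⟩, h⟩ => Sum.inr ⟨j, e, y, h⟩
  invFun x :=
    match x with
    | Sum.inl ⟨h⟩ => ⟨Sum.inl PUnit.unit, h⟩
    | Sum.inr ⟨j, e, y, h⟩ => ⟨Sum.inr ⟨j, e, y⟩, h⟩
  left_inv x := by rcases x with ⟨(_ | ⟨j, e, y⟩), h⟩ <;> rfl
  right_inv x := by rcases x with (⟨h⟩ | ⟨j, e, y, h⟩) <;> rfl

/-- Let `(p, d, k)` be Bratteli-diagram data with `p 0 = 1`, `d 0 ⟨0⟩ = 1`,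
nonnegative slacks, and every slack at positive levels equal to `0` or `1`.  Let `S` consist of
the unique vertex at level `0` together with all vertices of positive level with slack `1`.
Then the number of paths ending at vertex `i` of level `n` whose starting vertex lies in `S`
is exactly `d n i`. -/
theorem card_paths_from_S (p : ℕ → ℕ) (d : ∀ n, Fin (p n) → ℕ)
    (k : ∀ n, Fin (p (n + 1)) → Fin (p n) → ℕ)
    (hp0 : p 0 = 1) (hd0 : d 0 ⟨0, by omega⟩ = 1)
    (hle : ∀ n (i : Fin (p (n + 1))), ∑ j, k n i j * d n j ≤ d (n + 1) i)
    (hslack : ∀ n (i : Fin (p (n + 1))),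
      d (n + 1) i - ∑ j, k n i j * d n j = 0 ∨ d (n + 1) i - ∑ j, k n i j * d n j = 1) :
    ∀ n (i : Fin (p n)),
      Nat.card {x : BrattelPath p k n i // StartsInS p d k n i x} = d n i := by
  intro n
  induction n with
  | zero =>
    intro i
    have hdi : d 0 i = 1 := by
      rw [show i = ⟨0, by omega⟩ from by ext; omega]; exact hd0
    rw [hdi]
    have e : {x : BrattelPath p k 0 i // StartsInS p d k 0 i x} ≃ PUnit.{1} :=
      { toFun := fun _ => PUnit.unit
        invFun := fun _ => ⟨PUnit.unit, trivial⟩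
        left_inv := fun ⟨x, _⟩ => rfl
        right_inv := fun _ => rfl }
    rw [Nat.card_congr e, Nat.card_unique]
  | succ n ih =>
    intro i
    classical
    haveI : ∀ j, Finite (BrattelPath p k n j) := fun j => brattelPathFinite p k n j
    haveI : ∀ j : Fin (p n), Fintype {x : BrattelPath p k n j // StartsInS p d k n j x} :=
      fun j => Fintype.ofFinite _
    rw [Nat.card_congr (pathEquiv p d k n i), Nat.card_sum]
    have hsum : Nat.card ((j : Fin (p n)) × (Fin (k n i j) ×
        {x : BrattelPath p k n j // StartsInS p d k n j x})) = ∑ j, k n i j * d n j := by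
      rw [Nat.card_eq_fintype_card, Fintype.card_sigma]
      refine Finset.sum_congr rfl fun j _ => ?_
      rw [Fintype.card_prod, Fintype.card_fin, ← Nat.card_eq_fintype_card, ih j]
    rw [hsum]
    rcases hslack n i with h | h
    · have : Nat.card (PLift (d (n + 1) i - ∑ j, k n i j * d n j = 1)) = 0 := by
        rw [Nat.card_eq_zero]
        exact Or.inl ⟨fun h1 => by have := h1.down; omega⟩
      rw [this]
      have := hle n i
      omega
    · have : Nat.card (PLift (d (n + 1) i - ∑ j, k n i j * d n j = 1)) = 1 := by
        rw [Nat.card_eq_one_iff_unique]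
        exact ⟨⟨fun a b => by cases a; cases b; rfl⟩, ⟨⟨h⟩⟩⟩
      rw [this]
      have := hle n i
      omega
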